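/- arXiv:1805.05228 — 6 statements merged into one kernel-verified Lean document; each statement's English description precedes it below -/
import Mathlib

section
/- Let 𝒦 be a finite set of strings over an alphabet Σ, and let S_i, S_j be strings such that S_j is a proper suffix of S_i and S_i occurs in at least one string of 𝒦. Suppose that every string S' such that S_j is a suffix of S', S' is a suffix of S_i and S' ≠ S_i is not left-maximal in 𝒦, i.e., for each such S' there is a character a(S') ∈ Σ such that every occurrence of S' in 𝒦 is immediately preceded by a(S'). Then for every T ∈ 𝒦 and position e, S_i occurs in T ending at position e if and only if S_j occurs in T ending at position e. -/
/-- `OccursEndingAt P T e` : the string `P` occurs in `T` ending at position `e`,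
i.e. `T = u ++ P ++ v` with `|u| + |P| = e`. -/
def OccursEndingAt {α : Type*} (P T : List α) (e : ℕ) : Prop :=
  ∃ u v : List α, T = u ++ P ++ v ∧ u.length + P.length = e

/-- `NotLeftMaximal 𝒦 P` : there is a character `a` such that every occurrence of `P`
in a string of `𝒦` is immediately preceded by `a`. -/
def NotLeftMaximal {α : Type*} (𝒦 : Finset (List α)) (P : List α) : Prop :=
  ∃ a : α, ∀ T ∈ 𝒦, ∀ u v : List α, T = u ++ P ++ v → u ≠ [] ∧ u.getLast? = some a

/-!
Occurrences of `Si` are occurrences of its suffix `Sj`. Conversely, write `Si = p ++ Sj` and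
extend an occurrence of `Sj` to the left one character at a time: each intermediate suffix
`S'` is always preceded by the same character, and since `Si` occurs somewhere, that
character must be the one preceding `S'` inside `Si`.
-/

section

variable {α : Type*}

theorem OccursEndingAt.of_suffix {P Q T : List α} {e : ℕ} (hPQ : P <:+ Q)
    (hQ : OccursEndingAt Q T e) : OccursEndingAt P T e := by
  obtain ⟨p, rfl⟩ := hPQ
  obtain ⟨u, v, rfl, rfl⟩ := hQ
  exact ⟨u ++ p, v, by simp, by simp; omega⟩

theorem NotLeftMaximal.occursEndingAt_cons {𝒦 : Finset (List α)} {S : List α} {b : α}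
    (hS : NotLeftMaximal 𝒦 S) (hbS : ∃ T ∈ 𝒦, b :: S <:+: T)
    {T : List α} (hT : T ∈ 𝒦) {e : ℕ} (hocc : OccursEndingAt S T e) :
    OccursEndingAt (b :: S) T e := by
  obtain ⟨a, ha⟩ := hS
  have hab : a = b := by
    obtain ⟨T₀, hT₀, x, y, rfl⟩ := hbS
    simpa using (ha _ hT₀ (x ++ [b]) y (by simp)).2.symm
  subst hab
  obtain ⟨u, v, rfl, rfl⟩ := hocc
  obtain ⟨hu, hlast⟩ := ha _ hT u v rfl
  rcases u.eq_nil_or_concat with rfl | ⟨u', c, rfl⟩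
  · exact absurd rfl hu
  · obtain rfl : c = a := by simpa using hlast
    exact ⟨u', v, by simp, by simp; omega⟩

theorem occursEndingAt_append_of_notLeftMaximal {𝒦 : Finset (List α)} (p S : List α)
    (hocc : ∃ T ∈ 𝒦, p ++ S <:+: T)
    (hnlm : ∀ q, q <:+ p → q ≠ p → NotLeftMaximal 𝒦 (q ++ S))
    {T : List α} (hT : T ∈ 𝒦) {e : ℕ} (hS : OccursEndingAt S T e) :
    OccursEndingAt (p ++ S) T e := by
  induction p with
  | nil => exact hS
  | cons c p ih =>
    have hp : p <:+ c :: p := List.suffix_cons c p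
    have hocc' : ∃ T ∈ 𝒦, p ++ S <:+: T :=
      hocc.imp fun _ ⟨hT₀, h⟩ => ⟨hT₀, (List.suffix_cons c (p ++ S)).isInfix.trans h⟩
    have hpS : OccursEndingAt (p ++ S) T e :=
      ih hocc' fun q hq _ => hnlm q (hq.trans hp) fun h => by simpa [h] using hq.length_le
    exact (hnlm p hp (List.cons_ne_self c p).symm).occursEndingAt_cons hocc hT hpS

end

theorem occurrences_eq_of_not_left_maximal_general {α : Type*} (𝒦 : Finset (List α))
    (Si Sj : List α) (hsuf : Sj <:+ Si)
    (hocc : ∃ T ∈ 𝒦, Si <:+: T)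
    (hnlm : ∀ S' : List α, Sj <:+ S' → S' <:+ Si → S' ≠ Si → NotLeftMaximal 𝒦 S') :
    ∀ T ∈ 𝒦, ∀ e : ℕ, OccursEndingAt Si T e ↔ OccursEndingAt Sj T e := by
  obtain ⟨p, rfl⟩ := hsuf
  intro T hT e
  refine ⟨OccursEndingAt.of_suffix (List.suffix_append p Sj), ?_⟩
  refine occursEndingAt_append_of_notLeftMaximal p Sj hocc (fun q hq hq_ne => ?_) hT
  exact hnlm _ (List.suffix_append q Sj) (List.suffix_append_self_iff.mpr hq)
    (by simpa using hq_ne)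

/-- Lemma 1 of the paper: if `Sj` is a proper suffix of `Si`, `Si` occurs in some string
of `𝒦`, and no intermediate suffix `S'` (with `Sj <:+ S' <:+ Si`, `S' ≠ Si`) is
left-maximal in `𝒦`, then `Si` and `Sj` have exactly the same occurrences in `𝒦`. -/
theorem occurrences_eq_of_not_left_maximal {α : Type*} (𝒦 : Finset (List α))
    (Si Sj : List α) (hsuf : Sj <:+ Si) (hproper : Sj ≠ Si)
    (hocc : ∃ T ∈ 𝒦, Si <:+: T)
    (hnlm : ∀ S' : List α, Sj <:+ S' → S' <:+ Si → S' ≠ Si → NotLeftMaximal 𝒦 S') :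
    ∀ T ∈ 𝒦, ∀ e : ℕ, OccursEndingAt Si T e ↔ OccursEndingAt Sj T e :=
  occurrences_eq_of_not_left_maximal_general 𝒦 Si Sj hsuf hocc hnlm
end

section
/- Let 𝒦 be a finite set of strings over an alphabet Σ, and let S_i, S_j be strings such that S_j is a proper suffix of S_i and S_i occurs in at least one string of 𝒦. Suppose that every string S' such that S_j is a suffix of S', S' is a suffix of S_i and S' ≠ S_i is not left-maximal in 𝒦. Then S_i and S_j have the same sets of following characters in 𝒦: for every c ∈ Σ, the string S_i ++ [c] occurs as a contiguous sublist of some string of 𝒦 if and only if S_j ++ [c] occurs as a contiguous sublist of some string of 𝒦. (In de Bruijn graph terms: the nodes labelled S_i and S_j have the same outgoing edge labels.) -/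
def Occurs {α : Type*} (𝒦 : Finset (List α)) (P : List α) : Prop :=
  ∃ T ∈ 𝒦, P <:+: T

section

variable {α : Type*} {𝒦 : Finset (List α)}

theorem Occurs.mono {P Q : List α} (hPQ : P <:+: Q) (hQ : Occurs 𝒦 Q) : Occurs 𝒦 P := by
  obtain ⟨T, hT, hQT⟩ := hQ
  exact ⟨T, hT, hPQ.trans hQT⟩

theorem NotLeftMaximal.occurs_cons_append {P : List α} {b : α} (hP : NotLeftMaximal 𝒦 P)
    (hbP : Occurs 𝒦 (b :: P)) (x : List α) (hPx : Occurs 𝒦 (P ++ x)) :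
    Occurs 𝒦 (b :: P ++ x) := by
  obtain ⟨a, ha⟩ := hP
  have hab : a = b := by
    obtain ⟨T, hT, u, v, rfl⟩ := hbP
    simpa [eq_comm] using (ha _ hT (u ++ [b]) v (by simp)).2
  subst hab
  obtain ⟨T, hT, u, v, rfl⟩ := hPx
  obtain ⟨u', rfl⟩ := List.getLast?_eq_some_iff.mp (ha _ hT u (x ++ v) (by simp)).2
  exact ⟨_, hT, u', v, by simp⟩

theorem occurs_append_of_forall_notLeftMaximal {Si Sj : List α} (hsuf : Sj <:+ Si)
    (hocc : Occurs 𝒦 Si)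
    (hnlm : ∀ S' : List α, Sj <:+ S' → S' <:+ Si → S' ≠ Si → NotLeftMaximal 𝒦 S')
    {x : List α} (hx : Occurs 𝒦 (Sj ++ x)) : Occurs 𝒦 (Si ++ x) := by
  obtain ⟨w, hw⟩ := hsuf
  suffices ∀ w S', w ++ S' = Si → Sj <:+ S' → Occurs 𝒦 (S' ++ x) → Occurs 𝒦 (Si ++ x) from
    this w Sj hw (List.suffix_refl Sj) hx
  intro w
  induction w using List.reverseRecOn with
  | nil => rintro S' rfl - h; exact h
  | append_singleton w b ih =>
    rintro S' rfl hSjS' hS'x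
    have hbS' : b :: S' <:+ w ++ [b] ++ S' := ⟨w, by simp⟩
    have hS'ne : S' ≠ w ++ [b] ++ S' := fun h => by
      have := congrArg List.length h
      simp only [List.length_append, List.length_singleton] at this
      omega
    have hS' := hnlm S' hSjS' ((List.suffix_cons b S').trans hbS') hS'ne
    exact ih (b :: S') (by simp) (hSjS'.trans (List.suffix_cons b S'))
      (hS'.occurs_cons_append (hocc.mono hbS'.isInfix) x hS'x)

end

theorem same_outgoing_edges_of_not_left_maximal_general {α : Type*} (𝒦 : Finset (List α))
    (Si Sj : List α) (hsuf : Sj <:+ Si)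
    (hocc : ∃ T ∈ 𝒦, Si <:+: T)
    (hnlm : ∀ S' : List α, Sj <:+ S' → S' <:+ Si → S' ≠ Si → NotLeftMaximal 𝒦 S') :
    ∀ c : α, (∃ T ∈ 𝒦, (Si ++ [c]) <:+: T) ↔ (∃ T ∈ 𝒦, (Sj ++ [c]) <:+: T) := fun _ =>
  ⟨Occurs.mono (List.suffix_append_self_iff.mpr hsuf).isInfix,
    occurs_append_of_forall_notLeftMaximal hsuf hocc hnlm⟩

/-- If `Sj` is a proper suffix of `Si`, `Si` occurs in some string of `𝒦`, and no
intermediate suffix `S'` (with `Sj <:+ S' <:+ Si`, `S' ≠ Si`) is left-maximal in `𝒦`,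
then `Si` and `Sj` have the same sets of following characters in `𝒦` (i.e. the nodes
labelled `Si` and `Sj` have the same outgoing edge labels in the de Bruijn graph). -/
theorem same_outgoing_edges_of_not_left_maximal {α : Type*} (𝒦 : Finset (List α))
    (Si Sj : List α) (hsuf : Sj <:+ Si) (hproper : Sj ≠ Si)
    (hocc : ∃ T ∈ 𝒦, Si <:+: T)
    (hnlm : ∀ S' : List α, Sj <:+ S' → S' <:+ Si → S' ≠ Si → NotLeftMaximal 𝒦 S') :
    ∀ c : α, (∃ T ∈ 𝒦, (Si ++ [c]) <:+: T) ↔ (∃ T ∈ 𝒦, (Sj ++ [c]) <:+: T) :=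
  same_outgoing_edges_of_not_left_maximal_general 𝒦 Si Sj hsuf hocc hnlm
end

section
/- Let E be a directed graph on a finite vertex type V. Let v_0, …, v_k (k ≥ 1) be a walk such that every internal vertex has outdegree exactly 1, i.e., outdeg(v_t) = 1 for all 1 ≤ t ≤ k−1. Let u_0, …, u_{m−1} (m ≥ 1) be a closed edge-covering walk of E. Then the walk v_0, …, v_k occurs contiguously in the cyclic walk: there exists an index i < m such that u_{(i+t) mod m} = v_t for every 0 ≤ t ≤ k. (Hence every string spelled by appending characters only when there is a unique outgoing edge is safe: it occurs in every closed edge-covering reconstruction.) -/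
/-- The outdegree of a vertex `v` in the directed graph `E`: the number of
vertices `w` with `E v w`. -/
noncomputable def outdeg {V : Type*} (E : V → V → Prop) (v : V) : ℕ :=
  Nat.card {w : V // E v w}

/-- Any walk `v 0, …, v k` (with `k ≥ 1`) whose internal vertices all have outdegree
exactly `1` occurs contiguously in every closed edge-covering walk `u 0, …, u (m-1)`
of the graph; hence the string it spells is safe. -/
theorem walk_with_unique_extensions_safe {V : Type*} [Fintype V] (E : V → V → Prop)
    (k : ℕ) (hk : 1 ≤ k) (v : ℕ → V)
    (hwalk : ∀ t < k, E (v t) (v (t + 1)))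
    (hout : ∀ t, 1 ≤ t → t ≤ k - 1 → outdeg E (v t) = 1)
    (m : ℕ) (hm : 1 ≤ m) (u : ℕ → V)
    (hclosed : ∀ t < m, E (u t) (u ((t + 1) % m)))
    (hcover : ∀ x y : V, E x y → ∃ t < m, u t = x ∧ u ((t + 1) % m) = y) :
    ∃ i < m, ∀ t ≤ k, u ((i + t) % m) = v t := by
  obtain ⟨i, him, hi0, hi1⟩ := hcover (v 0) (v 1) (hwalk 0 hk)
  refine ⟨i, him, ?_⟩
  intro t ht
  induction t with
  | zero => simpa [Nat.mod_eq_of_lt him] using hi0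
  | succ t ih =>
    have ht' : t ≤ k := Nat.le_of_succ_le ht
    have ihv : u ((i + t) % m) = v t := ih ht'
    have hmod : (i + (t + 1)) % m = ((i + t) % m + 1) % m := by
      rw [Nat.mod_add_mod, Nat.add_assoc]
    rcases Nat.eq_zero_or_pos t with rfl | htpos
    · simpa [hmod, Nat.mod_eq_of_lt him] using hi1
    · -- t ≥ 1 and t ≤ k - 1, use outdegree 1
      have hjlt : (i + t) % m < m := Nat.mod_lt _ (Nat.lt_of_lt_of_le Nat.zero_lt_one hm)
      have hE1 : E (v t) (u (((i + t) % m + 1) % m)) := by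
        have := hclosed _ hjlt
        rwa [ihv] at this
      have hE2 : E (v t) (v (t + 1)) := hwalk t (Nat.lt_of_succ_le ht)
      have hcard : outdeg E (v t) = 1 := hout t htpos (Nat.le_sub_one_of_lt (Nat.lt_of_succ_le ht))
      obtain ⟨x, hx⟩ := Nat.card_eq_one_iff_exists.mp hcard
      have h1 : (⟨_, hE1⟩ : {w : V // E (v t) w}) = x := hx _
      have h2 : (⟨_, hE2⟩ : {w : V // E (v t) w}) = x := hx _
      rw [hmod]
      have := h1.trans h2.symm
      exact congrArg Subtype.val this
end

section
/- Let E be a directed graph on a finite vertex type V. Let v_0, …, v_k (k ≥ 1) be a unitig walk, i.e., a walk such that every internal vertex v_t (1 ≤ t ≤ k−1) has indegree exactly 1 and outdegree exactly 1. Let u_0, …, u_{m−1} (m ≥ 1) be a closed edge-covering walk of E. Then there exists an index i < m such that u_{(i+t) mod m} = v_t for every 0 ≤ t ≤ k; that is, every unitig is safe. -/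
/-- The indegree of a vertex `v` in the directed graph `E`: the number of
vertices `w` with `E w v`. -/
noncomputable def indeg {V : Type*} (E : V → V → Prop) (v : V) : ℕ :=
  Nat.card {w : V // E w v}

/-- Every unitig walk `v 0, …, v k` (with `k ≥ 1`), i.e. a walk whose internal vertices
all have indegree exactly `1` and outdegree exactly `1`, occurs contiguously in every
closed edge-covering walk `u 0, …, u (m-1)` of the graph; hence every unitig is safe. -/
theorem unitig_safe {V : Type*} [Fintype V] (E : V → V → Prop)
    (k : ℕ) (hk : 1 ≤ k) (v : ℕ → V)
    (hwalk : ∀ t < k, E (v t) (v (t + 1)))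
    (hdeg : ∀ t, 1 ≤ t → t ≤ k - 1 → indeg E (v t) = 1 ∧ outdeg E (v t) = 1)
    (m : ℕ) (hm : 1 ≤ m) (u : ℕ → V)
    (hclosed : ∀ t < m, E (u t) (u ((t + 1) % m)))
    (hcover : ∀ x y : V, E x y → ∃ t < m, u t = x ∧ u ((t + 1) % m) = y) :
    ∃ i < m, ∀ t ≤ k, u ((i + t) % m) = v t := by
  obtain ⟨i, him, h0, h1⟩ := hcover (v 0) (v 1) (hwalk 0 hk)
  refine ⟨i, him, ?_⟩
  intro t
  induction t with
  | zero => intro _; simpa [Nat.mod_eq_of_lt him] using h0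
  | succ t ih =>
    intro hle
    rcases Nat.eq_zero_or_pos t with rfl | ht
    · simpa using h1
    · have htk : t ≤ k := le_of_lt hle
      have hut : u ((i + t) % m) = v t := ih htk
      have hedge := hclosed ((i + t) % m) (Nat.mod_lt _ hm)
      rw [Nat.mod_add_mod, hut] at hedge
      -- hedge : E (v t) (u ((i + t + 1) % m))
      have hout : outdeg E (v t) = 1 := (hdeg t ht (by omega)).2
      rw [outdeg, Nat.card_eq_one_iff_unique] at hout
      have := hout.1
      have heq : (⟨u ((i + t + 1) % m), hedge⟩ : {w : V // E (v t) w}) =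
          ⟨v (t + 1), hwalk t hle⟩ := Subsingleton.elim _ _
      have := congrArg Subtype.val heq
      simpa [Nat.add_assoc] using this
end

section
/- Let Σ be a linearly ordered alphabet and let x, y, z be lists over Σ with x ≤lex y and y ≤lex z. If a list p is a prefix of both x and z, then p is a prefix of y. (Consequently, in a list of strings sorted lexicographically, the strings having a given prefix form a contiguous interval; applying this to reversed strings, in the right-to-left lexicographic ordering of the K-mers, the K-mers sharing a given suffix form a contiguous range of rows of the BOSS matrix.) -/
/-- The (non-strict) lexicographic order on lists over a linearly ordered alphabet:
`x ≤lex y` iff `x = y` or `x` precedes `y` in the lexicographic order. -/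
def lexLE {α : Type*} [LinearOrder α] (x y : List α) : Prop :=
  x = y ∨ List.Lex (· < ·) x y

lemma lexLE_head_le {α : Type*} [LinearOrder α] {a b : α} {u v : List α}
    (h : lexLE (a :: u) (b :: v)) : a ≤ b := by
  rcases h with h | h
  · injection h with h1 _; exact h1.le
  · cases h with
    | cons _ => exact le_refl _
    | rel h => exact h.le

lemma lexLE_tail {α : Type*} [LinearOrder α] {a : α} {u v : List α}
    (h : lexLE (a :: u) (a :: v)) : lexLE u v := by
  rcases h with h | h
  · injection h with _ h2; exact Or.inl h2
  · cases h with
    | cons h => exact Or.inr h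
    | rel h => exact absurd h (lt_irrefl a)

/-- If `x ≤lex y ≤lex z` and a list `p` is a prefix of both `x` and `z`, then `p`
is a prefix of `y`.  (Hence in a lexicographically sorted list of strings, the strings
having a given prefix form a contiguous interval; applied to reversed strings, the
`K`-mers sharing a given suffix form a contiguous range of rows of the BOSS matrix.) -/
theorem prefix_of_middle {α : Type*} [LinearOrder α] (x y z p : List α)
    (hxy : lexLE x y) (hyz : lexLE y z)
    (hpx : p <+: x) (hpz : p <+: z) : p <+: y := by
  induction p generalizing x y z with
  | nil => exact List.nil_prefix
  | cons a p ih =>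
    obtain ⟨x', rfl⟩ := hpx
    obtain ⟨z', rfl⟩ := hpz
    simp only [List.cons_append] at hxy hyz
    cases y with
    | nil =>
      rcases hxy with h | h
      · exact absurd h (by simp)
      · cases h
    | cons b y' =>
      have hab : a = b := le_antisymm (lexLE_head_le hxy) (lexLE_head_le hyz)
      subst hab
      have := ih _ _ _ (lexLE_tail hxy) (lexLE_tail hyz)
        ⟨x', rfl⟩ ⟨z', rfl⟩
      exact (List.prefix_cons_inj a).mpr this
end

section
/- Let Σ be a linearly ordered alphabet and let ws = w_0, …, w_{n−1} be a list of lists over Σ sorted with respect to ≤lex. Then for all indices i < j < n, lcp(w_i, w_j) = min over i ≤ t < j of lcp(w_t, w_{t+1}). (Applied to reversed strings, this says that the longest common suffix of any two K-mers in the right-to-left lexicographic order equals the minimum of the LCS array over the positions between them.) -/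
/-- `lcp x y` is the length of the longest common prefix of `x` and `y`. -/
def lcp {α : Type*} [DecidableEq α] : List α → List α → ℕ
  | a :: x, b :: y => if a = b then lcp x y + 1 else 0
  | _, _ => 0

/-! For `x ≤lex y ≤lex z`, the words `x` and `z` agree exactly as long as both agree with `y`:
if `x` and `z` shared a longer prefix than `x` and `y`, say, then `y` would have to sit strictly
between them at the first position where it leaves `x`, which the common prefix of `x` and `z`
forbids. So `lcp` is an ultrametric along a sorted list, and the claim follows by induction on
`j`, splitting off the last consecutive pair. -/

section lexLE

variable {α : Type*} [LinearOrder α]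

theorem eq_nil_of_lexLE_nil {x : List α} (h : lexLE x []) : x = [] := by
  rcases h with h | h
  · exact h
  · cases h

theorem lexLE_cons_cons {a b : α} {x y : List α} :
    lexLE (a :: x) (b :: y) ↔ a < b ∨ a = b ∧ lexLE x y := by
  constructor
  · rintro (h | h)
    · obtain ⟨rfl, rfl⟩ := List.cons.inj h
      exact .inr ⟨rfl, .inl rfl⟩
    · cases h with
      | cons h => exact .inr ⟨rfl, .inr h⟩
      | rel h => exact .inl h
  · rintro (h | ⟨rfl, rfl | h⟩)
    · exact .inr (.rel h)
    · exact .inl rfl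
    · exact .inr (.cons h)

theorem lcp_eq_min_of_lexLE {x y z : List α} (hxy : lexLE x y) (hyz : lexLE y z) :
    lcp x z = min (lcp x y) (lcp y z) := by
  induction x generalizing y z with
  | nil => simp [lcp]
  | cons a x ih =>
    match y, z, hxy, hyz with
    | [], _, hxy, _ => exact absurd (eq_nil_of_lexLE_nil hxy) (List.cons_ne_nil a x)
    | _ :: _, [], _, hyz => exact absurd (eq_nil_of_lexLE_nil hyz) (List.cons_ne_nil _ _)
    | b :: y, c :: z, hxy, hyz =>
      rcases lexLE_cons_cons.1 hxy with hab | ⟨rfl, hxy'⟩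
      · have hac : a < c := hab.trans_le (lexLE_cons_cons.1 hyz |>.elim le_of_lt (·.1.le))
        simp [lcp, hab.ne, hac.ne]
      rcases lexLE_cons_cons.1 hyz with hac | ⟨rfl, hyz'⟩
      · simp [lcp, hac.ne]
      · simp [lcp, ih hxy' hyz']

end lexLE

/-- In a lexicographically sorted list of strings `w 0, …, w (n-1)`, the longest common
prefix of `w i` and `w j` (for `i < j < n`) equals the minimum of the consecutive
values `lcp (w t) (w (t+1))` over `i ≤ t < j`.  (Applied to reversed strings, the
longest common suffix of any two `K`-mers equals the minimum of the LCS array over the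
positions between them.) -/
theorem lcp_eq_min_consecutive {α : Type*} [LinearOrder α] (n : ℕ) (w : ℕ → List α)
    (hsorted : ∀ s t : ℕ, s < t → t < n → lexLE (w s) (w t)) :
    ∀ i j : ℕ, (hij : i < j) → j < n →
      lcp (w i) (w j) =
        (Finset.Ico i j).inf' (by rwa [Finset.nonempty_Ico])
          (fun t => lcp (w t) (w (t + 1))) := by
  intro i j hij hjn
  induction j, hij using Nat.le_induction with
  | base => simp
  | succ j hij ih =>
    rw [lcp_eq_min_of_lexLE (hsorted i j hij (by omega)) (hsorted j (j + 1) j.lt_succ_self hjn),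
      ih (by omega), Finset.inf'_congr _ (Nat.Ico_succ_right_eq_insert_Ico (by omega)) (fun _ _ => rfl),
      Finset.inf'_insert, inf_comm]
end
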